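/- Let K : (-∞,0) ∪ (0,∞) → ℝ be concave on (-∞,0) and on (0,∞) and satisfy the generalized monotonicity condition lim_{t→-∞} K'(t) ≤ lim_{t→∞} K'(t). If t₁ < t₁ + h < 0 < t₂ (with h > 0), then K(t₂) − K(t₁) ≤ K(t₂ + h) − K(t₁ + h). -/

import Mathlib

open Filter Set Topology

/-!
Concavity bounds the secant slope of `K` over `[t₁, t₁ + h]` above by `K' t` at every point of
differentiability `t < t₁`, hence by `a`; symmetrically the slope over `[t₂, t₂ + h]` is at least
`b`. So the first slope is at most the second, which is the claim after multiplying by `h`.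
The limits `a` and `b` carry information only because the filters are nontrivial: a concave
function is locally Lipschitz, hence differentiable almost everywhere.
-/

theorem ConcaveOn.exists_differentiableAt {K : ℝ → ℝ} {C : Set ℝ} (hC : IsOpen C)
    (hK : ConcaveOn ℝ C K) (hne : C.Nonempty) : ∃ x ∈ C, DifferentiableAt ℝ K x := by
  obtain ⟨x₀, hx₀⟩ := hne
  obtain ⟨L, t, ht, hLip⟩ := hK.locallyLipschitzOn hC hx₀
  rw [nhdsWithin_eq_nhds.2 (hC.mem_nhds hx₀)] at ht
  set W := interior t ∩ C
  have hW : IsOpen W := isOpen_interior.inter hC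
  have hWpos : MeasureTheory.volume W ≠ 0 :=
    (hW.measure_pos _ ⟨x₀, mem_interior_iff_mem_nhds.2 ht, hx₀⟩).ne'
  have hae := (hLip.mono (inter_subset_left.trans interior_subset)).ae_differentiableWithinAt_of_mem
    (μ := MeasureTheory.volume) (s := W)
  obtain ⟨x, hxW, hx⟩ := (MeasureTheory.frequently_ae_mem_iff.2 hWpos).and_eventually hae |>.exists
  exact ⟨x, hxW.2, (hx hxW).differentiableAt (hW.mem_nhds hxW)⟩

theorem ConcaveOn.frequently_differentiableAt_atBot {K : ℝ → ℝ} {c : ℝ}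
    (hK : ConcaveOn ℝ (Iio c) K) : ∃ᶠ t in atBot, t < c ∧ DifferentiableAt ℝ K t := by
  refine frequently_atBot.2 fun x => ?_
  obtain ⟨t, ht, hdiff⟩ := (hK.subset (Iio_subset_Iio (min_le_right x c)) (convex_Iio _))
    |>.exists_differentiableAt isOpen_Iio nonempty_Iio
  exact ⟨t, ht.le.trans (min_le_left x c), ht.trans_le (min_le_right x c), hdiff⟩

theorem ConcaveOn.frequently_differentiableAt_atTop {K : ℝ → ℝ} {c : ℝ}
    (hK : ConcaveOn ℝ (Ioi c) K) : ∃ᶠ t in atTop, c < t ∧ DifferentiableAt ℝ K t := by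
  refine frequently_atTop.2 fun x => ?_
  obtain ⟨t, ht, hdiff⟩ := (hK.subset (Ioi_subset_Ioi (le_max_right x c)) (convex_Ioi _))
    |>.exists_differentiableAt isOpen_Ioi nonempty_Ioi
  exact ⟨t, (le_max_left x c).trans ht.le, (le_max_right x c).trans_lt ht, hdiff⟩

theorem ConcaveOn.slope_le_of_tendsto_deriv_atBot {K : ℝ → ℝ} {c : ℝ} {a : EReal}
    (hK : ConcaveOn ℝ (Iio c) K)
    (ha : Tendsto (fun t => ((deriv K t : ℝ) : EReal))
      (atBot ⊓ 𝓟 {t | t < c ∧ DifferentiableAt ℝ K t}) (𝓝 a))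
    {x y : ℝ} (hxy : x < y) (hy : y < c) : (slope K x y : EReal) ≤ a := by
  have := frequently_iff_neBot.1 hK.frequently_differentiableAt_atBot
  refine ge_of_tendsto ha <| eventually_inf_principal.2 ?_
  filter_upwards [eventually_lt_atBot x] with t htx ⟨htc, hdiff⟩
  have hx : x < c := hxy.trans hy
  refine EReal.coe_le_coe_iff.2 ?_
  calc slope K x y ≤ slope K t x := by
        simpa only [slope_def_field] using hK.slope_anti_adjacent htc hy htx hxy
    _ ≤ deriv K t := hK.slope_le_deriv htc hx htx hdiff

theorem ConcaveOn.le_slope_of_tendsto_deriv_atTop {K : ℝ → ℝ} {c : ℝ} {b : EReal}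
    (hK : ConcaveOn ℝ (Ioi c) K)
    (hb : Tendsto (fun t => ((deriv K t : ℝ) : EReal))
      (atTop ⊓ 𝓟 {t | c < t ∧ DifferentiableAt ℝ K t}) (𝓝 b))
    {x y : ℝ} (hx : c < x) (hxy : x < y) : b ≤ (slope K x y : EReal) := by
  have := frequently_iff_neBot.1 hK.frequently_differentiableAt_atTop
  refine le_of_tendsto hb <| eventually_inf_principal.2 ?_
  filter_upwards [eventually_gt_atTop y] with t hyt ⟨htc, hdiff⟩
  have hy : c < y := hx.trans hxy
  refine EReal.coe_le_coe_iff.2 ?_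
  calc deriv K t ≤ slope K y t := hK.deriv_le_slope hy htc hyt hdiff
    _ ≤ slope K x y := by
        simpa only [slope_def_field] using hK.slope_anti_adjacent hx htc hxy hyt

/-- For `K` concave on `(-∞,0)` and on `(0,∞)` satisfying generalized
monotonicity (the limits of `K'` at `-∞` and `+∞` over the set where `K'` exists
satisfy `a ≤ b`), if `t₁ < t₁ + h < 0 < t₂` (with `h > 0`), then
`K t₂ - K t₁ ≤ K (t₂ + h) - K (t₁ + h)`. -/
theorem kernel_cross_shift_inequality
    (K : ℝ → ℝ)
    (hK₁ : ConcaveOn ℝ (Set.Iio (0 : ℝ)) K)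
    (hK₂ : ConcaveOn ℝ (Set.Ioi (0 : ℝ)) K)
    (a b : EReal)
    (ha : Filter.Tendsto (fun t => ((deriv K t : ℝ) : EReal))
      (Filter.atBot ⊓ Filter.principal {t : ℝ | t < 0 ∧ DifferentiableAt ℝ K t}) (nhds a))
    (hb : Filter.Tendsto (fun t => ((deriv K t : ℝ) : EReal))
      (Filter.atTop ⊓ Filter.principal {t : ℝ | 0 < t ∧ DifferentiableAt ℝ K t}) (nhds b))
    (hab : a ≤ b)
    (t₁ t₂ h : ℝ) (hh : 0 < h) (h₁ : t₁ + h < 0) (h₂ : 0 < t₂) :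
    K t₂ - K t₁ ≤ K (t₂ + h) - K (t₁ + h) := by
  have hslope : slope K t₁ (t₁ + h) ≤ slope K t₂ (t₂ + h) := EReal.coe_le_coe_iff.1 <|
    (hK₁.slope_le_of_tendsto_deriv_atBot ha (lt_add_of_pos_right t₁ hh) h₁).trans <|
      hab.trans (hK₂.le_slope_of_tendsto_deriv_atTop hb h₂ (lt_add_of_pos_right t₂ hh))
  rw [slope_def_field, slope_def_field, add_sub_cancel_left, add_sub_cancel_left,
    div_le_div_iff_of_pos_right hh] at hslope
  linarith
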